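/- arXiv:1311.2330 — 2 statements merged into one kernel-verified Lean document; each statement's English description precedes it below -/
import Mathlib

section
/- Let α ≥ 2 and κ ≥ ω be cardinals, let μ be a cardinal with κ ≤ μ ≤ 2^{(α^{<κ})}, and set E := (D(α))^μ. If there is a cardinal ν < κ such that 2^{(α^ν)} = 2^{(α^{<κ})}, then d(E_κ) = α^{<κ}. -/
open Cardinal TopologicalSpace Set

universe u

/-- The `κ`-box topology on a product of topological spaces: generated by the boxes
`Π i, U i` with each `U i` open and fewer than `κ` coordinates restricted. -/
def boxTopology (κ : Cardinal.{u}) {ι : Type u} (X : ι → Type u)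
    [∀ i, TopologicalSpace (X i)] : TopologicalSpace (∀ i, X i) :=
  TopologicalSpace.generateFrom
    {S | ∃ U : ∀ i, Set (X i), (∀ i, IsOpen (U i)) ∧
      #{i | U i ≠ Set.univ} < κ ∧ S = Set.pi Set.univ U}

/-- The density character of a topological space: the least cardinality of a dense subset
(finite values allowed). -/
noncomputable def dens (X : Type u) [TopologicalSpace X] : Cardinal.{u} :=
  sInf {c | ∃ D : Set X, Dense D ∧ #D = c}

/-!
A dense set of size `α ^< κ` is built as in the Hewitt–Marczewski–Pondiczery theorem. Since
`μ ≤ 2 ^ (α ^ ν)`, the coordinates `m ∈ M` are coded by pairwise distinct subsets `e m` of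
`B = A ^ ν`. Fewer than `κ` coordinates are separated by fewer than `κ` test points `F` of `B`,
so a point of the dense set only has to look up the trace `F ⁻¹' e m` in a table of fewer than
`κ` entries; counting tables gives `α ^< κ`, as `ν < κ`. Conversely, for `λ < κ ≤ μ` the
`α ^ λ` boxes prescribing the coordinates on a fixed `λ`-subset of `M` are disjoint and open.
-/

open Function

theorem Cardinal.le_powerlt_self {a : Cardinal.{u}} (ha : 2 ≤ a) (b : Cardinal.{u}) :
    b ≤ a ^< b :=
  le_of_forall_lt fun c hc =>
    (cantor c).trans_le ((power_le_power_right ha).trans (le_powerlt a hc))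

theorem Ordinal.exists_mk_Iio_toType_eq {κ c : Cardinal.{u}} (hc : c < κ) :
    ∃ j : κ.ord.ToType, #(Iio j) = c := by
  have h : c.ord < type (α := κ.ord.ToType) (· < ·) := by
    rwa [type_toType, Cardinal.ord_lt_ord]
  refine ⟨enum (· < ·) ⟨c.ord, h⟩, ?_⟩
  calc #(Iio _) = (typein (α := κ.ord.ToType) (· < ·) (enum (· < ·) ⟨c.ord, h⟩)).card := rfl
    _ = c := by rw [typein_enum _ h, Cardinal.card_ord]

theorem Dense.mk_le_of_pairwise_disjoint {X : Type u} {ι : Type u} [TopologicalSpace X]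
    {D : Set X} (hD : Dense D) {U : ι → Set X} (hU : ∀ i, IsOpen (U i))
    (hne : ∀ i, (U i).Nonempty) (hdisj : Pairwise (Disjoint on U)) : #ι ≤ #D := by
  choose x hx using fun i => hD.inter_open_nonempty (U i) (hU i) (hne i)
  refine mk_le_of_injective (f := fun i => (⟨x i, (hx i).2⟩ : D)) fun i j hij => ?_
  by_contra hne
  exact (hdisj hne).ne_of_mem (hx i).1 (hx j).1 (congrArg Subtype.val hij)

theorem dens_le {X : Type u} [TopologicalSpace X] {D : Set X} (hD : Dense D) : dens X ≤ #D :=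
  csInf_le' ⟨D, hD, rfl⟩

theorem le_dens {X : Type u} [TopologicalSpace X] {c : Cardinal.{u}}
    (h : ∀ D : Set X, Dense D → c ≤ #D) : c ≤ dens X :=
  le_csInf ⟨_, univ, dense_univ, rfl⟩ (by rintro _ ⟨D, hD, rfl⟩; exact h D hD)

section BoxTopology

variable {κ : Cardinal.{u}} {ι : Type u} {X : ι → Type u} [∀ i, TopologicalSpace (X i)]

variable (κ X) in
def boxBasis : Set (Set (∀ i, X i)) :=
  {S | ∃ U : ∀ i, Set (X i), (∀ i, IsOpen (U i)) ∧
    #{i | U i ≠ Set.univ} < κ ∧ S = Set.pi Set.univ U}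

theorem isTopologicalBasis_boxBasis (hκ : ℵ₀ ≤ κ) :
    @IsTopologicalBasis _ (boxTopology κ X) (boxBasis κ X) := by
  refine @IsTopologicalBasis.mk _ (boxTopology κ X) _ ?_ ?_ rfl
  · rintro _ ⟨U₁, hU₁, hc₁, rfl⟩ _ ⟨U₂, hU₂, hc₂, rfl⟩ x hx
    refine ⟨_, ⟨fun i => U₁ i ∩ U₂ i, fun i => (hU₁ i).inter (hU₂ i), ?_, rfl⟩,
      by rwa [pi_inter_distrib], by rw [pi_inter_distrib]⟩
    have hsupp :
        {i | U₁ i ∩ U₂ i ≠ Set.univ} ⊆ {i | U₁ i ≠ Set.univ} ∪ {i | U₂ i ≠ Set.univ} := by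
      intro i hi
      by_contra h
      simp_all
    exact (mk_le_mk_of_subset hsupp).trans_lt
      ((mk_union_le _ _).trans_lt (add_lt_of_lt hκ hc₁ hc₂))
  · refine sUnion_eq_univ_iff.2 fun x =>
      ⟨Set.univ, ⟨fun _ => Set.univ, fun _ => isOpen_univ, ?_, ?_⟩, trivial⟩
    · simpa using aleph0_pos.trans_le hκ
    · simp

end BoxTopology

theorem powerlt_le_mk_of_dense_boxTopology {κ : Cardinal.{u}} {M A : Type u}
    [TopologicalSpace A] [DiscreteTopology A] [Nonempty A] (hκM : κ ≤ #M) {D : Set (M → A)}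
    (hD : @Dense _ (boxTopology κ fun _ => A) D) : #A ^< κ ≤ #D := by
  let := boxTopology κ fun _ : M => A
  refine powerlt_le.2 fun c hc => ?_
  obtain ⟨S, rfl⟩ := le_mk_iff_exists_set.1 (hc.le.trans hκM)
  let U (f : S → A) (m : M) : Set A := {a | ∀ h : m ∈ S, a = f ⟨m, h⟩}
  rw [power_def]
  refine hD.mk_le_of_pairwise_disjoint (U := fun f => Set.univ.pi (U f))
    (fun f => ?_) (fun f => ?_) ?_
  · refine isOpen_generateFrom_of_mem ⟨U f, fun _ => isOpen_discrete _, ?_, rfl⟩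
    refine (mk_le_mk_of_subset fun m hm => ?_).trans_lt hc
    by_contra hmS
    exact hm (eq_univ_of_forall fun a h => (hmS h).elim)
  · classical
    exact ⟨fun m => if h : m ∈ S then f ⟨m, h⟩ else Classical.arbitrary A,
      fun m _ h => by simp [h]⟩
  · intro f g hfg
    refine disjoint_left.2 fun x hf hg => hfg (funext fun s => ?_)
    rw [← hf s trivial s.2, ← hg s trivial s.2]

noncomputable def tracePoint {M B L A : Type*} (e : M → Set B) (F : L → B) (P : L → Set L)
    (v : L → A) (a₀ : A) (m : M) : A :=
  extend P v (fun _ => a₀) (F ⁻¹' e m)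

theorem exists_tracePoint_eqOn {M B L A : Type*} [Nonempty B] {e : M → Set B} {R : Set M}
    (he : InjOn e R) (σ : L ≃ R × R) (x : M → A) (a₀ : A) :
    ∃ (F : L → B) (P : L → Set L) (v : L → A), EqOn (tracePoint e F P v a₀) x R := by
  have hsep : ∀ p : R × R, ∃ b, (p.1 : M) ≠ p.2 → ¬(b ∈ e p.1 ↔ b ∈ e p.2) := by
    rintro ⟨⟨m, hm⟩, ⟨m', hm'⟩⟩
    by_cases h : m = m'
    · exact ⟨Classical.arbitrary B, fun h' => (h' h).elim⟩
    · obtain ⟨b, hb⟩ := not_forall.1 fun hb => h (he hm hm' (Set.ext hb))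
      exact ⟨b, fun _ => hb⟩
  choose sep hsep using hsep
  let F := sep ∘ σ
  have htrace : InjOn (fun m => F ⁻¹' e m) R := by
    intro m hm m' hm' h
    by_contra hne
    refine hsep (⟨m, hm⟩, ⟨m', hm'⟩) hne ?_
    simpa [F] using Set.ext_iff.1 h (σ.symm (⟨m, hm⟩, ⟨m', hm'⟩))
  refine ⟨F, fun l => F ⁻¹' e (σ l).1, fun l => x (σ l).1, fun m hm => ?_⟩
  have hfac : FactorsThrough (fun l => x (σ l).1) (fun l => F ⁻¹' e (σ l).1) :=
    fun l l' h => congrArg x (htrace (σ l).1.2 (σ l').1.2 h)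
  simpa [tracePoint] using hfac.extend_apply (fun _ => a₀) (σ.symm (⟨m, hm⟩, ⟨m, hm⟩))

/-- The types `Iio j`, `j : κ.ord.ToType`, realise every cardinality below `κ` using only `κ`
indices. -/
noncomputable def tracePoints (κ : Cardinal.{u}) {M B A : Type u} (e : M → Set B) (a₀ : A) :
    Set (M → A) :=
  ⋃ j : κ.ord.ToType, range fun p : (Iio j → B) × (Iio j → Set (Iio j)) × (Iio j → A) =>
    tracePoint e p.1 p.2.1 p.2.2 a₀

theorem dense_tracePoints {κ : Cardinal.{u}} (hκ : ℵ₀ ≤ κ) {M B A : Type u}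
    [TopologicalSpace A] [Nonempty B] {e : M → Set B} (he : Injective e) (a₀ : A) :
    @Dense _ (boxTopology κ fun _ => A) (tracePoints κ e a₀) := by
  refine (@IsTopologicalBasis.dense_iff _ (boxTopology κ fun _ => A) _
    (isTopologicalBasis_boxBasis hκ) _).2 ?_
  rintro _ ⟨U, -, hU, rfl⟩ ⟨x, hx⟩
  let R := {m | U m ≠ Set.univ}
  obtain ⟨j, hj⟩ := Ordinal.exists_mk_Iio_toType_eq (mul_lt_of_lt hκ hU hU)
  obtain ⟨σ⟩ : Nonempty (Iio j ≃ R × R) := Cardinal.eq.1 (by rw [hj, mk_prod, lift_id])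
  obtain ⟨F, P, v, hFPv⟩ := exists_tracePoint_eqOn he.injOn σ x a₀
  refine ⟨tracePoint e F P v a₀, fun m _ => ?_, mem_iUnion.2 ⟨j, (F, P, v), rfl⟩⟩
  by_cases hm : m ∈ R
  · rw [hFPv hm]
    exact hx m trivial
  · rw [not_not.1 hm]
    trivial

theorem mk_tracePoints_le {κ : Cardinal.{u}} (hκ : ℵ₀ ≤ κ) {M N A : Type u} (hA : 2 ≤ #A)
    (hN : #N < κ) (e : M → Set (N → A)) (a₀ : A) : #(tracePoints κ e a₀) ≤ #A ^< κ := by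
  have htable (j : κ.ord.ToType) :
      #((Iio j → N → A) × (Iio j → Set (Iio j)) × (Iio j → A)) ≤ #A ^< κ := by
    have hj : #(Iio j) < κ := (mk_Iio_lt j (by simp)).trans_eq (by simp)
    calc _ = (#A ^ #N) ^ #(Iio j) * ((2 ^ #(Iio j)) ^ #(Iio j) * #A ^ #(Iio j)) := by
            simp only [mk_prod, lift_id, ← power_def, mk_set]
      _ ≤ (#A ^ #N) ^ #(Iio j) * ((#A ^ #(Iio j)) ^ #(Iio j) * #A ^ #(Iio j)) := by
            gcongr
            exact power_le_power_right (power_le_power_right hA)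
      _ = #A ^ (#N * #(Iio j) + (#(Iio j) * #(Iio j) + #(Iio j))) := by
            rw [power_add, power_add, power_mul, power_mul]
      _ ≤ #A ^< κ := le_powerlt _ <| add_lt_of_lt hκ (mul_lt_of_lt hκ hN hj) <|
            add_lt_of_lt hκ (mul_lt_of_lt hκ hj hj) hj
  have hinf : ℵ₀ ≤ #A ^< κ := hκ.trans (le_powerlt_self hA κ)
  calc #(tracePoints κ e a₀) ≤ #κ.ord.ToType * ⨆ j, #(range _) := mk_iUnion_le _
    _ ≤ κ * #A ^< κ := by
      rw [mk_toType, card_ord]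
      gcongr
      exact ciSup_le' fun j => mk_range_le.trans (htable j)
    _ ≤ #A ^< κ * #A ^< κ := by gcongr; exact le_powerlt_self hA κ
    _ = #A ^< κ := mul_eq_self hinf

theorem stmt11 (α κ μ : Cardinal.{u}) (hα : 2 ≤ α) (hκ : ℵ₀ ≤ κ)
    (hμ1 : κ ≤ μ) (hμ2 : μ ≤ (2 : Cardinal.{u}) ^ (α ^< κ))
    (A M : Type u) [TopologicalSpace A] [DiscreteTopology A]
    (hA : #A = α) (hM : #M = μ)
    (h : ∃ ν < κ, (2 : Cardinal.{u}) ^ (α ^ ν) = (2 : Cardinal.{u}) ^ (α ^< κ)) :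
    @dens (∀ _ : M, A) (boxTopology κ fun _ => A) = α ^< κ := by
  subst hA hM
  let := boxTopology κ fun _ : M => A
  obtain ⟨ν, hν, hνe⟩ := h
  have : Nonempty A := mk_ne_zero_iff.1 (two_pos.trans_le hα).ne'
  obtain ⟨e⟩ : Nonempty (M ↪ Set (ν.out → A)) := by
    rwa [← le_def, mk_set, ← power_def, mk_out, hνe]
  refine le_antisymm ?_ (le_dens fun D hD => powerlt_le_mk_of_dense_boxTopology hμ1 hD)
  exact (dens_le (dense_tracePoints hκ e.injective (Classical.arbitrary A))).trans
    (mk_tracePoints_le hκ hα (by rwa [mk_out]) e _)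
end

section
/- Let α ≥ 2 and κ ≥ ω be cardinals and let {X_i : i ∈ I} be a set of topological spaces with d(X_i) ≤ α for each i ∈ I. Then S((X_I)_κ) ≤ (α^{<κ})⁺. -/
/-!
Shrink each member of a cellular family of the `κ`-box product to a nonempty box with support of
size `< κ` and pick a point of the box with coordinates in fixed dense sets of size `≤ α`. Two
disjoint boxes force the two points to differ at a coordinate in both supports, so coding the
coordinates by elements of `α` turns the family into pairwise incompatible partial functions.
Grouping by support size `λ < κ` (at most `κ ≤ α^{<κ}` groups), it suffices to bound one group
by some `θ ≤ α^{<κ}` with `θ^λ = θ`. For such `θ`, König's theorem gives `cf θ > λ`. Iterating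
`θ` times the operation that adds to a set of coordinates the domains of one chosen member per
restriction to that set yields a set `B` of `θ` coordinates such that every `≤ λ` coordinates of
`B` lie in a stage `B'` whose restrictions are all realized by members with domain inside `B`.
Only `θ` members have domain inside `B`; any other member `a` agrees on `B' ⊇ dom a ∩ B` with
such a member, hence is compatible with it.
-/

open Cardinal TopologicalSpace Set

universe u

/-- A cellular family: a family of pairwise disjoint nonempty open sets. -/
def IsCellular {X : Type u} [TopologicalSpace X] (C : Set (Set X)) : Prop :=
  (∀ U ∈ C, IsOpen U ∧ U.Nonempty) ∧ C.Pairwise fun U V => Disjoint U V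

/-- The Souslin number: the least cardinal `c` such that no cellular family has
cardinality `c` (finite values allowed). -/
noncomputable def souslin (X : Type u) [TopologicalSpace X] : Cardinal.{u} :=
  sInf {c | ¬∃ C : Set (Set X), IsCellular C ∧ #C = c}

namespace Cardinal

theorem self_le_powerlt {α : Cardinal.{u}} (hα : 2 ≤ α) (κ : Cardinal.{u}) : κ ≤ α ^< κ := by
  by_contra! h
  have : (2 : Cardinal) ^ (α ^< κ) ≤ α ^< κ :=
    (power_le_power_right hα).trans (le_powerlt α h)
  exact (cantor _).not_ge this

theorem exists_power_le_self_le_powerlt {α κ lam : Cardinal.{u}} (hα : 2 ≤ α) (hκ : ℵ₀ ≤ κ)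
    (hlam : lam < κ) : ∃ θ, ℵ₀ ≤ θ ∧ α ≤ θ ∧ θ ^ lam ≤ θ ∧ θ ≤ α ^< κ := by
  rcases lt_or_ge lam ℵ₀ with hfin | hinf
  · obtain ⟨n, rfl⟩ := lt_aleph0.1 hfin
    have hα_le : α ≤ α ^< κ := by
      simpa using le_powerlt α (one_lt_aleph0.trans_le hκ)
    exact ⟨max α ℵ₀, le_max_right _ _, le_max_left _ _, power_nat_le (le_max_right _ _),
      max_le hα_le (hκ.trans (self_le_powerlt hα κ))⟩
  · refine ⟨α ^ lam, ?_, self_le_power α (one_le_aleph0.trans hinf), ?_, le_powerlt α hlam⟩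
    · exact (hinf.trans (cantor lam).le).trans (power_le_power_right hα)
    · rw [← power_mul, mul_eq_self hinf]

theorem mk_le_of_forall_lt_mk_le {A : Type u} {κ μ : Cardinal.{u}} (hμ : ℵ₀ ≤ μ) (hκμ : κ ≤ μ)
    (f : A → Cardinal.{u}) (hf : ∀ a, f a < κ) (h : ∀ c < κ, #{a // f a ≤ c} ≤ μ) :
    #A ≤ μ := by
  have hcover : ⋃ o : Set.Iio κ.ord, {a | f a ≤ o.1.card} = Set.univ :=
    Set.eq_univ_of_forall fun a => Set.mem_iUnion.2 ⟨⟨(f a).ord, ord_lt_ord.2 (hf a)⟩, by simp⟩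
  have hunion := mk_iUnion_le_lift fun o : Set.Iio κ.ord => {a | f a ≤ o.1.card}
  rw [hcover, mk_univ, mk_Iio_ordinal, card_ord, lift_lift] at hunion
  have hfib : ⨆ o : Set.Iio κ.ord, lift.{u + 1} #{a | f a ≤ o.1.card} ≤ lift.{u + 1} μ :=
    ciSup_le' fun o => lift_le.2 (h _ (lt_ord.1 o.2))
  have := hunion.trans (mul_le_mul' (lift_le.2 hκμ) hfib)
  rwa [← lift_mul, mul_eq_self hμ, lift_le] at this

theorem lt_cof_ord_of_power_le {θ lam : Cardinal.{u}} (hθ : ℵ₀ ≤ θ) (hpow : θ ^ lam ≤ θ) :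
    lam < θ.ord.cof := by
  by_contra! hcof
  have hθ0 : θ ≠ 0 := (aleph0_pos.trans_le hθ).ne'
  exact (lt_power_cof_ord hθ).not_ge ((power_le_power_left hθ0 hcof).trans hpow)

end Cardinal

open Function

section ClosureStage

variable {I W : Type u} [LinearOrder W] [WellFoundedLT W]

noncomputable def closureStage (c : Set I → Set I) : W → Set I :=
  WellFoundedLT.fix fun x stage => ⋃ y : Set.Iio x, c (stage y y.2)

theorem closureStage_eq (c : Set I → Set I) (x : W) :
    closureStage c x = ⋃ y : Set.Iio x, c (closureStage c y.1) := by
  rw [closureStage, WellFoundedLT.fix_eq]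

theorem mk_closureStage_le {θ : Cardinal.{u}} (hθ : ℵ₀ ≤ θ) (hW : #W ≤ θ) {c : Set I → Set I}
    (hc : ∀ B : Set I, #B ≤ θ → #(c B) ≤ θ) (x : W) : #(closureStage c x) ≤ θ := by
  induction x using WellFoundedLT.induction with
  | ind x ih =>
    rw [closureStage_eq]
    refine (mk_iUnion_le _).trans ((mul_le_mul' ((mk_subtype_le _).trans hW) ?_).trans
      (mul_eq_self hθ).le)
    exact ciSup_le' fun y => hc _ (ih y.1 y.2)

theorem exists_subset_closureStage (c : Set I → Set I) {T : Set I}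
    (hT : T ⊆ ⋃ x : W, c (closureStage c x)) (hTW : #T < Order.cof W) :
    ∃ x : W, T ⊆ closureStage c x := by
  have hmem : ∀ i : T, ∃ x : W, i.1 ∈ c (closureStage c x) := fun i => Set.mem_iUnion.1 (hT i.2)
  choose stage hstage using hmem
  have hbounded : ¬ IsCofinal (Set.range stage) := fun hcof =>
    ((Order.cof_le hcof).trans mk_range_le).not_gt hTW
  obtain ⟨x, hx⟩ : ∃ x : W, ∀ i : T, stage i < x := by
    simpa [IsCofinal] using hbounded
  refine ⟨x, fun i hi => ?_⟩
  rw [closureStage_eq]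
  exact Set.mem_iUnion.2 ⟨⟨stage ⟨i, hi⟩, hx _⟩, hstage ⟨i, hi⟩⟩

end ClosureStage

section PartialFunction

-- A partial function `I ⇀ V` is encoded as `I → WithZero V`, with `0` for "undefined", so that
-- its domain is `Function.support` and its restriction to `B` is `B.indicator`.

variable {A I V : Type u} {lam θ : Cardinal.{u}}

theorem eq_of_forall_eq_coe_iff {f g : I → WithZero V}
    (h : ∀ i (v : V), f i = v ↔ g i = v) : f = g := by
  funext i
  induction hf : f i using WithZero.recZeroCoe with
  | zero =>
    induction hg : g i using WithZero.recZeroCoe with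
    | zero => rfl
    | coe w => simpa [hf] using (h i w).2 hg
  | coe v => exact ((h i v).1 hf).symm

theorem mk_partialFun_le {B : Set I} (hθ : ℵ₀ ≤ θ) (hB : #B ≤ θ)
    (hV : #V ≤ θ) (hpow : θ ^ lam ≤ θ) :
    #{f : I → WithZero V // support f ⊆ B ∧ #(support f) ≤ lam} ≤ θ := by
  let graph (f : I → WithZero V) : Set (I × V) := {p | f p.1 = p.2}
  have mem_support_of_mem_graph {f : I → WithZero V} {p : I × V} (hp : p ∈ graph f) :
      p.1 ∈ support f := by
    rw [mem_support, show f p.1 = p.2 from hp]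
    exact WithZero.coe_ne_zero
  have hgraph_sub {f : I → WithZero V} (hf : support f ⊆ B) : graph f ⊆ B ×ˢ Set.univ :=
    fun p hp => ⟨hf (mem_support_of_mem_graph hp), trivial⟩
  have hgraph_mk (f : I → WithZero V) : #(graph f) ≤ #(support f) := by
    refine mk_le_of_injective (f := fun p : graph f => ⟨p.1.1, mem_support_of_mem_graph p.2⟩) ?_
    rintro ⟨⟨i, v⟩, hv⟩ ⟨⟨j, w⟩, hw⟩ hij
    obtain rfl : i = j := congrArg Subtype.val hij
    obtain rfl : v = w := WithZero.coe_inj.1 (hv.symm.trans hw)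
    rfl
  have hgraph_inj :
      Injective fun f : {f : I → WithZero V // support f ⊆ B ∧ #(support f) ≤ lam} =>
      (⟨graph f, hgraph_sub f.2.1, (hgraph_mk f).trans f.2.2⟩ :
        {t : Set (I × V) // t ⊆ B ×ˢ Set.univ ∧ #t ≤ lam}) := by
    intro f g hfg
    refine Subtype.ext (eq_of_forall_eq_coe_iff fun i v => ?_)
    exact Set.ext_iff.1 (congrArg Subtype.val hfg) (i, v)
  have hprod : #(B ×ˢ (Set.univ : Set V)) ≤ θ := by
    rw [mk_congr (Equiv.Set.prod _ _), mk_prod, lift_id, lift_id, mk_univ]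
    exact (mul_le_mul' hB hV).trans (mul_eq_self hθ).le
  calc _ ≤ _ := mk_le_of_injective hgraph_inj
    _ ≤ max #(B ×ˢ (Set.univ : Set V)) ℵ₀ ^ lam := mk_bounded_subset_le _ _
    _ ≤ θ := (power_le_power_right (max_le hprod hθ)).trans hpow

theorem mk_range_indicator_le {B : Set I} (hθ : ℵ₀ ≤ θ) (hB : #B ≤ θ) (hV : #V ≤ θ)
    (hpow : θ ^ lam ≤ θ) (F : A → I → WithZero V) (hsupp : ∀ a, #(support (F a)) ≤ lam) :
    #(Set.range fun a => B.indicator (F a)) ≤ θ := by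
  refine (mk_le_mk_of_subset (t := {f : I → WithZero V | support f ⊆ B ∧ #(support f) ≤ lam})
    ?_).trans (mk_partialFun_le hθ hB hV hpow)
  rintro _ ⟨a, rfl⟩
  refine ⟨?_, ?_⟩ <;> rw [Set.support_indicator]
  · exact Set.inter_subset_left
  · exact (mk_le_mk_of_subset Set.inter_subset_right).trans (hsupp a)

theorem mk_le_of_pairwise_exists_ne (hθ : ℵ₀ ≤ θ) (hpow : θ ^ lam ≤ θ) (hV : #V ≤ θ)
    (F : A → I → WithZero V) (hsupp : ∀ a, #(support (F a)) ≤ lam)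
    (hF : Pairwise fun a b => ∃ i ∈ support (F a) ∩ support (F b), F a i ≠ F b i) :
    #A ≤ θ := by
  by_contra! hA
  have : Nonempty A := mk_ne_zero_iff.1 (zero_le.trans_lt hA).ne'
  have hF_inj : Injective F := fun a b hab => by
    by_contra hab'
    obtain ⟨i, -, hi⟩ := hF hab'
    exact hi (congrFun hab i)
  have hlam : lam < Order.cof θ.ord.ToType := by
    rw [Ordinal.cof_toType]
    exact lt_cof_ord_of_power_le hθ hpow
  have hlamθ : lam ≤ θ := hlam.le.trans ((Order.cof_le_cardinalMk _).trans (mk_ord_toType θ).le)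
  -- `c B` is the union of the domains of one chosen member realizing each restriction to `B`.
  let c (B : Set I) : Set I :=
    ⋃ g ∈ Set.range fun a => B.indicator (F a),
      support (F (invFun (fun a => B.indicator (F a)) g))
  have hc (B : Set I) (hB : #B ≤ θ) : #(c B) ≤ θ :=
    calc #(c B) ≤ θ * θ := (mk_biUnion_le _ _).trans <|
          mul_le_mul' (mk_range_indicator_le hθ hB hV hpow F hsupp)
            (ciSup_le' fun _ => (hsupp _).trans hlamθ)
      _ = θ := mul_eq_self hθ
  set B := ⋃ x : θ.ord.ToType, c (closureStage c x)
  have hB : #B ≤ θ :=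
    calc #B ≤ θ * θ := (mk_iUnion_le _).trans <| mul_le_mul' (mk_ord_toType θ).le
          (ciSup_le' fun x => hc _ (mk_closureStage_le hθ (mk_ord_toType θ).le hc x))
      _ = θ := mul_eq_self hθ
  obtain ⟨a, ha⟩ : ∃ a, ¬ support (F a) ⊆ B := by
    by_contra! hall
    refine hA.not_ge ((mk_le_of_injective (f := fun a => (⟨F a, hall a, hsupp a⟩ :
      {f : I → WithZero V // support f ⊆ B ∧ #(support f) ≤ lam})) ?_).trans
      (mk_partialFun_le hθ hB hV hpow))
    exact fun a b hab => hF_inj (congrArg Subtype.val hab)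
  obtain ⟨x, hx⟩ := exists_subset_closureStage c (T := support (F a) ∩ B) Set.inter_subset_right
    (((mk_le_mk_of_subset Set.inter_subset_left).trans (hsupp a)).trans_lt hlam)
  set B' := closureStage c x
  set a₀ := invFun (fun a => B'.indicator (F a)) (B'.indicator (F a))
  have ha₀ : B'.indicator (F a₀) = B'.indicator (F a) :=
    invFun_eq (f := fun a => B'.indicator (F a)) ⟨a, rfl⟩
  have ha₀B : support (F a₀) ⊆ B :=
    calc support (F a₀) ⊆ c B' :=
          Set.subset_biUnion_of_mem (Set.mem_range_self a)
            (u := fun g => support (F (invFun (fun a => B'.indicator (F a)) g)))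
      _ ⊆ B := Set.subset_iUnion (fun x => c (closureStage c x)) x
  obtain ⟨i, ⟨hi₀, hi⟩, hne⟩ := hF (fun h : a₀ = a => ha (h ▸ ha₀B))
  have hiB' : i ∈ B' := hx ⟨hi, ha₀B hi₀⟩
  exact hne (by simpa [Set.indicator_of_mem hiB'] using congrFun ha₀ i)

end PartialFunction

theorem exists_dense_mk_eq_dens (X : Type u) [TopologicalSpace X] :
    ∃ D : Set X, Dense D ∧ #D = dens X :=
  csInf_mem (s := {c | ∃ D : Set X, Dense D ∧ #D = c}) ⟨_, Set.univ, dense_univ, rfl⟩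

theorem souslin_le_succ {X : Type u} [TopologicalSpace X] {μ : Cardinal.{u}}
    (h : ∀ C : Set (Set X), IsCellular C → #C ≤ μ) : souslin X ≤ Order.succ μ :=
  csInf_le' fun ⟨C, hC, hCμ⟩ => (Order.lt_succ μ).not_ge (hCμ ▸ h C hC)

section BoxProduct

variable {ι : Type u} {X : ι → Type u}

theorem isTopologicalBasis_boxTopology [∀ i, TopologicalSpace (X i)] {κ : Cardinal.{u}}
    (hκ : ℵ₀ ≤ κ) :
    @IsTopologicalBasis _ (boxTopology κ X) {S | ∃ U : ∀ i, Set (X i), (∀ i, IsOpen (U i)) ∧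
      #{i | U i ≠ Set.univ} < κ ∧ S = Set.pi Set.univ U} := by
  let := boxTopology κ X
  refine ⟨?_, ?_, rfl⟩
  · rintro _ ⟨U, hUo, hUκ, rfl⟩ _ ⟨U', hU'o, hU'κ, rfl⟩ x hx
    refine ⟨_, ⟨fun i => U i ∩ U' i, fun i => (hUo i).inter (hU'o i), ?_,
      Set.pi_inter_distrib.symm⟩, hx, subset_rfl⟩
    have hsub : {i | U i ∩ U' i ≠ Set.univ} ⊆ {i | U i ≠ Set.univ} ∪ {i | U' i ≠ Set.univ} :=
      fun i hi => by_contra fun h => hi (by simp_all)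
    exact (mk_le_mk_of_subset hsub).trans_lt
      ((mk_union_le _ _).trans_lt (add_lt_of_lt hκ hUκ hU'κ))
  · refine Set.eq_univ_of_forall fun x => ⟨Set.univ, ⟨fun _ => Set.univ, fun _ => isOpen_univ, ?_,
      Set.pi_univ _ |>.symm⟩, trivial⟩
    simpa using aleph0_pos.trans_le hκ

theorem exists_ne_of_disjoint_pi {U U' : ∀ i, Set (X i)} {x y : ∀ i, X i}
    (hx : x ∈ Set.pi Set.univ U) (hy : y ∈ Set.pi Set.univ U')
    (hUU' : Disjoint (Set.pi Set.univ U) (Set.pi Set.univ U')) :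
    ∃ i, U i ≠ Set.univ ∧ U' i ≠ Set.univ ∧ x i ≠ y i := by
  classical
  by_contra! h
  let z : ∀ i, X i := fun i => if U i = Set.univ then y i else x i
  have hzU : z ∈ Set.pi Set.univ U := fun i _ => by
    by_cases hi : U i = Set.univ <;> simp [z, hi, hx i trivial]
  have hzU' : z ∈ Set.pi Set.univ U' := fun i _ => by
    by_cases hi : U i = Set.univ
    · simp [z, hi, hy i trivial]
    · by_cases hi' : U' i = Set.univ
      · simp [hi']
      · simpa [z, hi, h i hi hi'] using hy i trivial
  exact Set.disjoint_left.1 hUU' hzU hzU'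

theorem exists_pi_subset_mem_dense [∀ i, TopologicalSpace (X i)] {κ : Cardinal.{u}}
    (hκ : ℵ₀ ≤ κ) {D : ∀ i, Set (X i)} (hD : ∀ i, Dense (D i)) {O : Set (∀ i, X i)}
    (hO : @IsOpen _ (boxTopology κ X) O) (hne : O.Nonempty) :
    ∃ W : ∀ i, Set (X i), #{i | W i ≠ Set.univ} < κ ∧ Set.pi Set.univ W ⊆ O ∧
      ∃ x ∈ Set.pi Set.univ W, ∀ i, x i ∈ D i := by
  let := boxTopology κ X
  obtain ⟨y, hy⟩ := hne
  obtain ⟨_, ⟨W, hWo, hWκ, rfl⟩, hyW, hWO⟩ :=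
    (isTopologicalBasis_boxTopology hκ).exists_subset_of_mem_open hy hO
  have hmeet (i : ι) : (W i ∩ D i).Nonempty :=
    (hD i).inter_open_nonempty _ (hWo i) ⟨y i, hyW i trivial⟩
  choose x hxW hxD using hmeet
  exact ⟨W, hWκ, hWO, x, fun i _ => hxW i, hxD⟩

theorem mk_le_powerlt_of_isCellular [∀ i, TopologicalSpace (X i)] {α κ : Cardinal.{u}}
    (hα : 2 ≤ α) (hκ : ℵ₀ ≤ κ) (hd : ∀ i, dens (X i) ≤ α) {C : Set (Set (∀ i, X i))}
    (hC : @IsCellular _ (boxTopology κ X) C) : #C ≤ α ^< κ := by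
  classical
  have hD (i : ι) : ∃ D : Set (X i), Dense D ∧ Nonempty (D ↪ α.out) := by
    obtain ⟨D, hD, hDc⟩ := exists_dense_mk_eq_dens (X i)
    exact ⟨D, hD, (le_def _ _).1 (by rw [mk_out, hDc]; exact hd i)⟩
  choose D hD emb using hD
  have hbox (U : C) := exists_pi_subset_mem_dense hκ hD (hC.1 U U.2).1 (hC.1 U U.2).2
  choose W hWκ hWU x hxW hxD using hbox
  let F (U : C) (i : ι) : WithZero α.out :=
    if W U i = Set.univ then 0 else (emb i).some ⟨x U i, hxD U i⟩
  have hFsupp (U : C) : support (F U) = {i | W U i ≠ Set.univ} := by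
    ext i
    by_cases h : W U i = Set.univ <;> simp [F, h]
  have hF : Pairwise fun U U' => ∃ i ∈ support (F U) ∩ support (F U'), F U i ≠ F U' i := by
    intro U U' hUU'
    obtain ⟨i, hi, hi', hx⟩ := exists_ne_of_disjoint_pi (hxW U) (hxW U')
      ((hC.2 U.2 U'.2 (Subtype.coe_ne_coe.2 hUU')).mono (hWU U) (hWU U'))
    refine ⟨i, by simp [hFsupp, hi, hi'], ?_⟩
    simpa [F, hi, hi', (emb i).some.injective.eq_iff] using hx
  refine mk_le_of_forall_lt_mk_le (hκ.trans (self_le_powerlt hα κ)) (self_le_powerlt hα κ)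
    (fun U => #{i | W U i ≠ Set.univ}) hWκ fun lam hlam => ?_
  obtain ⟨θ, hθ, hαθ, hpow, hθμ⟩ := exists_power_le_self_le_powerlt hα hκ hlam
  refine le_trans ?_ hθμ
  exact mk_le_of_pairwise_exists_ne hθ hpow ((mk_out α).trans_le hαθ) (fun U => F U.1)
    (fun U => hFsupp U.1 ▸ U.2) (hF.comp_of_injective Subtype.val_injective)

end BoxProduct

theorem stmt15 (α κ : Cardinal.{u}) (hα : 2 ≤ α) (hκ : ℵ₀ ≤ κ)
    {ι : Type u} (X : ι → Type u) [∀ i, TopologicalSpace (X i)]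
    (hd : ∀ i, dens (X i) ≤ α) :
    @souslin (∀ i, X i) (boxTopology κ X) ≤ Order.succ (α ^< κ) :=
  @souslin_le_succ _ (boxTopology κ X) _ fun _ hC => mk_le_powerlt_of_isCellular hα hκ hd hC
end
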